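/- If Δ' ⪰ Δ and the sequent Δ → F has an I_G-proof with n occurrences of the ∨-L rule, then Δ' → F has an I_G-proof with n or fewer occurrences of the ∨-L rule. -/

import Mathlib

set_option maxHeartbeats 1000000

/-- Terms of a first-order language: variables (de Bruijn indices for
quantified variables) and constants. -/
inductive Tm : Type
  | var : ℕ → Tm
  | const : ℕ → Tm

namespace Tm

/-- Substitution of the term `u` for the variable with index `k`. -/
def subst (k : ℕ) (u : Tm) : Tm → Tm
  | var n => if n = k then u else var n
  | const c => const c

/-- The constant `c` occurs in a term. -/
def constIn (c : ℕ) : Tm → Prop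
  | var _ => False
  | const d => d = c

end Tm

/-- First-order formulas over the primitives ⊤, ⊥, ∧, ∨, ⊃, ∃, ∀.
Quantifiers are represented with de Bruijn indices. -/
inductive Fm : Type
  | top : Fm
  | bot : Fm
  | atom : ℕ → List Tm → Fm
  | conj : Fm → Fm → Fm
  | disj : Fm → Fm → Fm
  | imp : Fm → Fm → Fm
  | ex : Fm → Fm
  | all : Fm → Fm

namespace Fm

/-- Substitution of a term for the variable with de Bruijn index `k`. -/
def subst (k : ℕ) (u : Tm) : Fm → Fm
  | top => top
  | bot => bot
  | atom p ts => atom p (ts.map (Tm.subst k u))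
  | conj a b => conj (subst k u a) (subst k u b)
  | disj a b => disj (subst k u a) (subst k u b)
  | imp a b => imp (subst k u a) (subst k u b)
  | ex a => ex (subst (k + 1) u a)
  | all a => all (subst (k + 1) u a)

/-- `[t/x]B`: instantiation of the outermost bound variable of the body of a
quantified formula with the term `u`. -/
def inst (u : Tm) (a : Fm) : Fm := subst 0 u a

/-- Atomic formulas (⊤ and ⊥ are *not* atomic). -/
def isAtom : Fm → Prop
  | atom _ _ => True
  | _ => False

/-- Formulas that need no right-introduction rule in a uniform/O_G proof:
atomic formulas and ⊥. -/
def neutral (F : Fm) : Prop := F.isAtom ∨ F = bot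

/-- The constant `c` occurs in a formula. -/
def constIn (c : ℕ) : Fm → Prop
  | top => False
  | bot => False
  | atom _ ts => ∃ t ∈ ts, t.constIn c
  | conj a b => constIn c a ∨ constIn c b
  | disj a b => constIn c a ∨ constIn c b
  | imp a b => constIn c a ∨ constIn c b
  | ex a => constIn c a
  | all a => constIn c a

end Fm

/-- The eigenvariable (constant) `c` does not occur in the sequent `Γ → Δ`. -/
def FreshSeq (c : ℕ) (Γ Δ : Multiset Fm) : Prop :=
  (∀ F ∈ Γ, ¬ F.constIn c) ∧ ∀ F ∈ Δ, ¬ F.constIn c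

/-- The sequent `Γ → Δ` is an axiom: ⊤ ∈ Δ, or some `A` that is ⊥ or atomic
belongs to both `Γ` and `Δ`. -/
def AxSeq (Γ Δ : Multiset Fm) : Prop :=
  Fm.top ∈ Δ ∨ ∃ A : Fm, (A = Fm.bot ∨ A.isAtom) ∧ A ∈ Γ ∧ A ∈ Δ

/-- C-proofs: arbitrary derivations in the sequent calculus of the paper.
Sequents are pairs of multisets of formulas. -/
inductive CProof : Multiset Fm → Multiset Fm → Type
  | ax {Γ Δ : Multiset Fm} (h : AxSeq Γ Δ) : CProof Γ Δ
  | contrL {B : Fm} {Γ Δ : Multiset Fm} (p : CProof (B ::ₘ B ::ₘ Γ) Δ) : CProof (B ::ₘ Γ) Δ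
  | contrR {B : Fm} {Γ Δ : Multiset Fm} (p : CProof Γ (B ::ₘ B ::ₘ Δ)) : CProof Γ (B ::ₘ Δ)
  | botR {D : Fm} {Γ Δ : Multiset Fm} (p : CProof Γ (Fm.bot ::ₘ Δ)) : CProof Γ (D ::ₘ Δ)
  | andL {B D : Fm} {Γ Δ : Multiset Fm} (p : CProof (B ::ₘ D ::ₘ (B.conj D) ::ₘ Γ) Δ) :
      CProof ((B.conj D) ::ₘ Γ) Δ
  | andR {B D : Fm} {Γ Δ : Multiset Fm} (p : CProof Γ (B ::ₘ Δ)) (q : CProof Γ (D ::ₘ Δ)) :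
      CProof Γ ((B.conj D) ::ₘ Δ)
  | orL {B D : Fm} {Γ Δ : Multiset Fm} (p : CProof (B ::ₘ Γ) Δ) (q : CProof (D ::ₘ Γ) Δ) :
      CProof ((B.disj D) ::ₘ Γ) Δ
  | orR1 {B D : Fm} {Γ Δ : Multiset Fm} (p : CProof Γ (B ::ₘ Δ)) : CProof Γ ((B.disj D) ::ₘ Δ)
  | orR2 {B D : Fm} {Γ Δ : Multiset Fm} (p : CProof Γ (D ::ₘ Δ)) : CProof Γ ((B.disj D) ::ₘ Δ)
  | impL {B D : Fm} {Γ Δ Θ : Multiset Fm} (p : CProof ((B.imp D) ::ₘ Γ) (B ::ₘ Δ))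
      (q : CProof (D ::ₘ Γ) Θ) : CProof ((B.imp D) ::ₘ Γ) (Δ + Θ)
  | impR {B D : Fm} {Γ Δ : Multiset Fm} (p : CProof (B ::ₘ Γ) (D ::ₘ Δ)) :
      CProof Γ ((B.imp D) ::ₘ Δ)
  | allL {B : Fm} {Γ Δ : Multiset Fm} (t : Tm)
      (p : CProof ((B.inst t) ::ₘ (Fm.all B) ::ₘ Γ) Δ) : CProof ((Fm.all B) ::ₘ Γ) Δ
  | exR {B : Fm} {Γ Δ : Multiset Fm} (t : Tm) (p : CProof Γ ((B.inst t) ::ₘ Δ)) :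
      CProof Γ ((Fm.ex B) ::ₘ Δ)
  | exL {B : Fm} {Γ Δ : Multiset Fm} (c : ℕ) (hc : FreshSeq c ((Fm.ex B) ::ₘ Γ) Δ)
      (p : CProof ((B.inst (Tm.const c)) ::ₘ Γ) Δ) : CProof ((Fm.ex B) ::ₘ Γ) Δ
  | allR {B : Fm} {Γ Δ : Multiset Fm} (c : ℕ) (hc : FreshSeq c Γ ((Fm.all B) ::ₘ Δ))
      (p : CProof Γ ((B.inst (Tm.const c)) ::ₘ Δ)) : CProof Γ ((Fm.all B) ::ₘ Δ)

namespace CProof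

/-- An I-proof is a C-proof in which every sequent has exactly one formula in
its succedent. -/
def isI : ∀ (Γ Δ : Multiset Fm), CProof Γ Δ → Prop
  | _, _, @ax _ Δ _ => Multiset.card Δ = 1
  | _, _, @contrL _ _ Δ p => Multiset.card Δ = 1 ∧ isI _ _ p
  | _, _, @contrR B _ Δ p => Multiset.card (B ::ₘ Δ) = 1 ∧ isI _ _ p
  | _, _, @botR D _ Δ p => Multiset.card (D ::ₘ Δ) = 1 ∧ isI _ _ p
  | _, _, @andL _ _ _ Δ p => Multiset.card Δ = 1 ∧ isI _ _ p
  | _, _, @andR B D _ Δ p q => Multiset.card ((B.conj D) ::ₘ Δ) = 1 ∧ isI _ _ p ∧ isI _ _ q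
  | _, _, @orL _ _ _ Δ p q => Multiset.card Δ = 1 ∧ isI _ _ p ∧ isI _ _ q
  | _, _, @orR1 B D _ Δ p => Multiset.card ((B.disj D) ::ₘ Δ) = 1 ∧ isI _ _ p
  | _, _, @orR2 B D _ Δ p => Multiset.card ((B.disj D) ::ₘ Δ) = 1 ∧ isI _ _ p
  | _, _, @impL _ _ _ Δ Θ p q => Multiset.card (Δ + Θ) = 1 ∧ isI _ _ p ∧ isI _ _ q
  | _, _, @impR B D _ Δ p => Multiset.card ((B.imp D) ::ₘ Δ) = 1 ∧ isI _ _ p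
  | _, _, @allL _ _ Δ _ p => Multiset.card Δ = 1 ∧ isI _ _ p
  | _, _, @exR B _ Δ _ p => Multiset.card ((Fm.ex B) ::ₘ Δ) = 1 ∧ isI _ _ p
  | _, _, @exL _ _ Δ _ _ p => Multiset.card Δ = 1 ∧ isI _ _ p
  | _, _, @allR B _ Δ _ _ p => Multiset.card ((Fm.all B) ::ₘ Δ) = 1 ∧ isI _ _ p

end CProof

/-- Classical provability: `Γ ⊢_C F`. -/
def CProv (Γ : Multiset Fm) (F : Fm) : Prop := Nonempty (CProof Γ ({F} : Multiset Fm))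

/-- Intuitionistic provability: `Γ ⊢_I F`. -/
def IProv (Γ : Multiset Fm) (F : Fm) : Prop := ∃ p : CProof Γ ({F} : Multiset Fm), p.isI

namespace CProof

open Classical in
/-- The nonconstructiveness measure of a C-proof: the number of
nonconstructive occurrences of ∨-L and ⊃-R rules in it. -/
noncomputable def mu : ∀ (Γ Δ : Multiset Fm), CProof Γ Δ → ℕ
  | _, _, ax _ => 0
  | _, _, contrL p => mu _ _ p
  | _, _, contrR p => mu _ _ p
  | _, _, botR p => mu _ _ p
  | _, _, andL p => mu _ _ p
  | _, _, andR p q => mu _ _ p + mu _ _ q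
  | _, _, @orL B D Γ Δ p q =>
      mu _ _ p + mu _ _ q +
        (if ∃ F ∈ Δ, IProv (B ::ₘ Γ) F ∧ IProv (D ::ₘ Γ) F then 0 else 1)
  | _, _, orR1 p => mu _ _ p
  | _, _, orR2 p => mu _ _ p
  | _, _, impL p q => mu _ _ p + mu _ _ q
  | _, _, @impR B D Γ _ p => mu _ _ p + (if IProv (B ::ₘ Γ) D then 0 else 1)
  | _, _, allL _ p => mu _ _ p
  | _, _, exR _ p => mu _ _ p
  | _, _, exL _ _ p => mu _ _ p
  | _, _, allR _ _ p => mu _ _ p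

/-- The sequent `S → P` appears in the given C-proof. -/
def occursSeq : ∀ (Γ Δ : Multiset Fm), CProof Γ Δ → Multiset Fm → Multiset Fm → Prop
  | _, _, @ax Γ Δ _, S, P => Γ = S ∧ Δ = P
  | _, _, @contrL B Γ Δ p, S, P => ((B ::ₘ Γ) = S ∧ Δ = P) ∨ occursSeq _ _ p S P
  | _, _, @contrR B Γ Δ p, S, P => (Γ = S ∧ (B ::ₘ Δ) = P) ∨ occursSeq _ _ p S P
  | _, _, @botR D Γ Δ p, S, P => (Γ = S ∧ (D ::ₘ Δ) = P) ∨ occursSeq _ _ p S P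
  | _, _, @andL B D Γ Δ p, S, P => (((B.conj D) ::ₘ Γ) = S ∧ Δ = P) ∨ occursSeq _ _ p S P
  | _, _, @andR B D Γ Δ p q, S, P =>
      (Γ = S ∧ ((B.conj D) ::ₘ Δ) = P) ∨ occursSeq _ _ p S P ∨ occursSeq _ _ q S P
  | _, _, @orL B D Γ Δ p q, S, P =>
      (((B.disj D) ::ₘ Γ) = S ∧ Δ = P) ∨ occursSeq _ _ p S P ∨ occursSeq _ _ q S P
  | _, _, @orR1 B D Γ Δ p, S, P => (Γ = S ∧ ((B.disj D) ::ₘ Δ) = P) ∨ occursSeq _ _ p S P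
  | _, _, @orR2 B D Γ Δ p, S, P => (Γ = S ∧ ((B.disj D) ::ₘ Δ) = P) ∨ occursSeq _ _ p S P
  | _, _, @impL B D Γ Δ Θ p q, S, P =>
      (((B.imp D) ::ₘ Γ) = S ∧ (Δ + Θ) = P) ∨ occursSeq _ _ p S P ∨ occursSeq _ _ q S P
  | _, _, @impR B D Γ Δ p, S, P => (Γ = S ∧ ((B.imp D) ::ₘ Δ) = P) ∨ occursSeq _ _ p S P
  | _, _, @allL B Γ Δ _ p, S, P => (((Fm.all B) ::ₘ Γ) = S ∧ Δ = P) ∨ occursSeq _ _ p S P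
  | _, _, @exR B Γ Δ _ p, S, P => (Γ = S ∧ ((Fm.ex B) ::ₘ Δ) = P) ∨ occursSeq _ _ p S P
  | _, _, @exL B Γ Δ _ _ p, S, P => (((Fm.ex B) ::ₘ Γ) = S ∧ Δ = P) ∨ occursSeq _ _ p S P
  | _, _, @allR B Γ Δ _ _ p, S, P => (Γ = S ∧ ((Fm.all B) ::ₘ Δ) = P) ∨ occursSeq _ _ p S P

/-- `hasImpR p B S P D` holds when an ⊃-R rule with upper sequent
`B,S → P,D` and lower sequent `S → P,B⊃D` occurs in the proof `p`. -/
def hasImpR : ∀ (Γ Δ : Multiset Fm), CProof Γ Δ → Fm → Multiset Fm → Multiset Fm → Fm → Prop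
  | _, _, ax _, _, _, _, _ => False
  | _, _, contrL p, B, S, P, D => hasImpR _ _ p B S P D
  | _, _, contrR p, B, S, P, D => hasImpR _ _ p B S P D
  | _, _, botR p, B, S, P, D => hasImpR _ _ p B S P D
  | _, _, andL p, B, S, P, D => hasImpR _ _ p B S P D
  | _, _, andR p q, B, S, P, D => hasImpR _ _ p B S P D ∨ hasImpR _ _ q B S P D
  | _, _, orL p q, B, S, P, D => hasImpR _ _ p B S P D ∨ hasImpR _ _ q B S P D
  | _, _, orR1 p, B, S, P, D => hasImpR _ _ p B S P D
  | _, _, orR2 p, B, S, P, D => hasImpR _ _ p B S P D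
  | _, _, impL p q, B, S, P, D => hasImpR _ _ p B S P D ∨ hasImpR _ _ q B S P D
  | _, _, @impR B' D' Γ' Δ' p, B, S, P, D =>
      (B' = B ∧ Γ' = S ∧ Δ' = P ∧ D' = D) ∨ hasImpR _ _ p B S P D
  | _, _, allL _ p, B, S, P, D => hasImpR _ _ p B S P D
  | _, _, exR _ p, B, S, P, D => hasImpR _ _ p B S P D
  | _, _, exL _ _ p, B, S, P, D => hasImpR _ _ p B S P D
  | _, _, allR _ _ p, B, S, P, D => hasImpR _ _ p B S P D

/-- `hasOrL p B D S P` holds when an ∨-L rule with upper sequents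
`B,S → P` and `D,S → P` and lower sequent `B∨D,S → P` occurs in `p`. -/
def hasOrL : ∀ (Γ Δ : Multiset Fm), CProof Γ Δ → Fm → Fm → Multiset Fm → Multiset Fm → Prop
  | _, _, ax _, _, _, _, _ => False
  | _, _, contrL p, B, D, S, P => hasOrL _ _ p B D S P
  | _, _, contrR p, B, D, S, P => hasOrL _ _ p B D S P
  | _, _, botR p, B, D, S, P => hasOrL _ _ p B D S P
  | _, _, andL p, B, D, S, P => hasOrL _ _ p B D S P
  | _, _, andR p q, B, D, S, P => hasOrL _ _ p B D S P ∨ hasOrL _ _ q B D S P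
  | _, _, @orL B' D' Γ' Δ' p q, B, D, S, P =>
      (B' = B ∧ D' = D ∧ Γ' = S ∧ Δ' = P) ∨ hasOrL _ _ p B D S P ∨ hasOrL _ _ q B D S P
  | _, _, orR1 p, B, D, S, P => hasOrL _ _ p B D S P
  | _, _, orR2 p, B, D, S, P => hasOrL _ _ p B D S P
  | _, _, impL p q, B, D, S, P => hasOrL _ _ p B D S P ∨ hasOrL _ _ q B D S P
  | _, _, impR p, B, D, S, P => hasOrL _ _ p B D S P
  | _, _, allL _ p, B, D, S, P => hasOrL _ _ p B D S P
  | _, _, exR _ p, B, D, S, P => hasOrL _ _ p B D S P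
  | _, _, exL _ _ p, B, D, S, P => hasOrL _ _ p B D S P
  | _, _, allR _ _ p, B, D, S, P => hasOrL _ _ p B D S P

/-- Every formula in `Δ` is atomic or ⊥. -/
def neutralM (Δ : Multiset Fm) : Prop := ∀ F ∈ Δ, F.neutral

/-- A uniform proof: an I-proof in which any sequent whose succedent contains
a non-atomic formula occurs only as the lower sequent of an inference rule
that introduces the top-level logical symbol of that formula. -/
def isUniform : ∀ (Γ Δ : Multiset Fm), CProof Γ Δ → Prop
  | _, _, @ax _ Δ _ => Multiset.card Δ = 1
  | _, _, @contrL _ _ Δ p => Multiset.card Δ = 1 ∧ neutralM Δ ∧ isUniform _ _ p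
  | _, _, @contrR B _ Δ p =>
      Multiset.card (B ::ₘ Δ) = 1 ∧ neutralM (B ::ₘ Δ) ∧ isUniform _ _ p
  | _, _, @botR D _ Δ p =>
      Multiset.card (D ::ₘ Δ) = 1 ∧ neutralM (D ::ₘ Δ) ∧ isUniform _ _ p
  | _, _, @andL _ _ _ Δ p => Multiset.card Δ = 1 ∧ neutralM Δ ∧ isUniform _ _ p
  | _, _, @andR B D _ Δ p q =>
      Multiset.card ((B.conj D) ::ₘ Δ) = 1 ∧ isUniform _ _ p ∧ isUniform _ _ q
  | _, _, @orL _ _ _ Δ p q =>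
      Multiset.card Δ = 1 ∧ neutralM Δ ∧ isUniform _ _ p ∧ isUniform _ _ q
  | _, _, @orR1 B D _ Δ p => Multiset.card ((B.disj D) ::ₘ Δ) = 1 ∧ isUniform _ _ p
  | _, _, @orR2 B D _ Δ p => Multiset.card ((B.disj D) ::ₘ Δ) = 1 ∧ isUniform _ _ p
  | _, _, @impL _ _ _ Δ Θ p q =>
      Multiset.card (Δ + Θ) = 1 ∧ neutralM (Δ + Θ) ∧ isUniform _ _ p ∧ isUniform _ _ q
  | _, _, @impR B D _ Δ p => Multiset.card ((B.imp D) ::ₘ Δ) = 1 ∧ isUniform _ _ p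
  | _, _, @allL _ _ Δ _ p => Multiset.card Δ = 1 ∧ neutralM Δ ∧ isUniform _ _ p
  | _, _, @exR B _ Δ _ p => Multiset.card ((Fm.ex B) ::ₘ Δ) = 1 ∧ isUniform _ _ p
  | _, _, @exL _ _ Δ _ _ p => Multiset.card Δ = 1 ∧ neutralM Δ ∧ isUniform _ _ p
  | _, _, @allR B _ Δ _ _ p => Multiset.card ((Fm.all B) ::ₘ Δ) = 1 ∧ isUniform _ _ p

end CProof

/-- Uniform provability: `Γ ⊢_O F`. -/
def UProv (Γ : Multiset Fm) (F : Fm) : Prop :=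
  ∃ p : CProof Γ ({F} : Multiset Fm), p.isUniform

/-- The ordering ⪰ measuring the strength of formulas as assumptions. -/
inductive Fm.ge : Fm → Fm → Prop
  | refl (F : Fm) : Fm.ge F F
  | imp {F A B : Fm} : Fm.ge F B → Fm.ge F (Fm.imp A B)
  | disjl {F A B : Fm} : Fm.ge F A → Fm.ge F (Fm.disj A B)
  | disjr {F A B : Fm} : Fm.ge F B → Fm.ge F (Fm.disj A B)
  | ex {F P : Fm} (c : ℕ) : Fm.ge F (P.inst (Tm.const c)) → Fm.ge F (Fm.ex P)

/-- `MsGe Γ₁ Γ₂`: there is an injective map κ from `Γ₂` into `Γ₁` with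
`κ(F) ⪰ F` for every `F ∈ Γ₂`. -/
def MsGe (Γ₁ Γ₂ : Multiset Fm) : Prop :=
  ∃ Γ' ≤ Γ₁, Multiset.Rel Fm.ge Γ' Γ₂

mutual
  /-- G-formulas: G ::= ⊤ | ⊥ | A | G∧G | G∨G | D⊃G | ∃x G. -/
  inductive GFm : Fm → Prop
    | top : GFm Fm.top
    | bot : GFm Fm.bot
    | atom {p : ℕ} {ts : List Tm} : GFm (Fm.atom p ts)
    | conj {a b : Fm} : GFm a → GFm b → GFm (Fm.conj a b)
    | disj {a b : Fm} : GFm a → GFm b → GFm (Fm.disj a b)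
    | imp {a b : Fm} : DFm a → GFm b → GFm (Fm.imp a b)
    | ex {a : Fm} : GFm a → GFm (Fm.ex a)

  /-- D-formulas: D ::= ⊤ | ⊥ | A | G⊃D | D∧D | D∨D | ∃x D | ∀x D. -/
  inductive DFm : Fm → Prop
    | top : DFm Fm.top
    | bot : DFm Fm.bot
    | atom {p : ℕ} {ts : List Tm} : DFm (Fm.atom p ts)
    | imp {a b : Fm} : GFm a → DFm b → DFm (Fm.imp a b)
    | conj {a b : Fm} : DFm a → DFm b → DFm (Fm.conj a b)
    | disj {a b : Fm} : DFm a → DFm b → DFm (Fm.disj a b)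
    | ex {a : Fm} : DFm a → DFm (Fm.ex a)
    | all {a : Fm} : DFm a → DFm (Fm.all a)
end
/-- I_G-proofs: derivations in the intuitionistic sequent calculus (single
succedent formula) augmented with the derived rules ∨-L_G and res_G, in which
the eigenvariable proviso on ∃-L and ∀-R also disallows constants in `G`. -/
inductive IGProof (G : Fm) : Multiset Fm → Fm → Type
  | ax {Γ : Multiset Fm} {F : Fm} (h : AxSeq Γ ({F} : Multiset Fm)) : IGProof G Γ F
  | contrL {B : Fm} {Γ : Multiset Fm} {F : Fm} (p : IGProof G (B ::ₘ B ::ₘ Γ) F) :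
      IGProof G (B ::ₘ Γ) F
  | botR {Γ : Multiset Fm} {F : Fm} (p : IGProof G Γ Fm.bot) : IGProof G Γ F
  | andL {B D : Fm} {Γ : Multiset Fm} {F : Fm}
      (p : IGProof G (B ::ₘ D ::ₘ (B.conj D) ::ₘ Γ) F) : IGProof G ((B.conj D) ::ₘ Γ) F
  | andR {B D : Fm} {Γ : Multiset Fm} (p : IGProof G Γ B) (q : IGProof G Γ D) :
      IGProof G Γ (B.conj D)
  | orL {B D : Fm} {Γ : Multiset Fm} {F : Fm} (p : IGProof G (B ::ₘ Γ) F)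
      (q : IGProof G (D ::ₘ Γ) F) : IGProof G ((B.disj D) ::ₘ Γ) F
  | orR1 {B D : Fm} {Γ : Multiset Fm} (p : IGProof G Γ B) : IGProof G Γ (B.disj D)
  | orR2 {B D : Fm} {Γ : Multiset Fm} (p : IGProof G Γ D) : IGProof G Γ (B.disj D)
  | impL {B D : Fm} {Γ : Multiset Fm} {F : Fm} (p : IGProof G ((B.imp D) ::ₘ Γ) B)
      (q : IGProof G (D ::ₘ Γ) F) : IGProof G ((B.imp D) ::ₘ Γ) F
  | impR {B D : Fm} {Γ : Multiset Fm} (p : IGProof G (B ::ₘ Γ) D) : IGProof G Γ (B.imp D)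
  | allL {B : Fm} {Γ : Multiset Fm} {F : Fm} (t : Tm)
      (p : IGProof G ((B.inst t) ::ₘ (Fm.all B) ::ₘ Γ) F) : IGProof G ((Fm.all B) ::ₘ Γ) F
  | exR {B : Fm} {Γ : Multiset Fm} (t : Tm) (p : IGProof G Γ (B.inst t)) :
      IGProof G Γ (Fm.ex B)
  | exL {B : Fm} {Γ : Multiset Fm} {F : Fm} (c : ℕ)
      (hc : FreshSeq c ((Fm.ex B) ::ₘ Γ) ({F} : Multiset Fm)) (hG : ¬ G.constIn c)
      (p : IGProof G ((B.inst (Tm.const c)) ::ₘ Γ) F) : IGProof G ((Fm.ex B) ::ₘ Γ) F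
  | allR {B : Fm} {Γ : Multiset Fm} (c : ℕ)
      (hc : FreshSeq c Γ ({Fm.all B} : Multiset Fm)) (hG : ¬ G.constIn c)
      (p : IGProof G Γ (B.inst (Tm.const c))) : IGProof G Γ (Fm.all B)
  | orLG {B D : Fm} {Γ : Multiset Fm} {F : Fm} (p : IGProof G (B ::ₘ Γ) F)
      (q : IGProof G (D ::ₘ Γ) G) : IGProof G ((B.disj D) ::ₘ Γ) F
  | resG {Γ : Multiset Fm} {F : Fm} (p : IGProof G Γ G) : IGProof G Γ F

namespace IGProof

/-- The number of occurrences of the ∨-L rule in an I_G-proof. -/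
def orLCount : ∀ (G : Fm) (Γ : Multiset Fm) (F : Fm), IGProof G Γ F → ℕ
  | _, _, _, ax _ => 0
  | _, _, _, contrL p => orLCount _ _ _ p
  | _, _, _, botR p => orLCount _ _ _ p
  | _, _, _, andL p => orLCount _ _ _ p
  | _, _, _, andR p q => orLCount _ _ _ p + orLCount _ _ _ q
  | _, _, _, orL p q => orLCount _ _ _ p + orLCount _ _ _ q + 1
  | _, _, _, orR1 p => orLCount _ _ _ p
  | _, _, _, orR2 p => orLCount _ _ _ p
  | _, _, _, impL p q => orLCount _ _ _ p + orLCount _ _ _ q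
  | _, _, _, impR p => orLCount _ _ _ p
  | _, _, _, allL _ p => orLCount _ _ _ p
  | _, _, _, exR _ p => orLCount _ _ _ p
  | _, _, _, exL _ _ _ p => orLCount _ _ _ p
  | _, _, _, allR _ _ _ p => orLCount _ _ _ p
  | _, _, _, orLG p q => orLCount _ _ _ p + orLCount _ _ _ q
  | _, _, _, resG p => orLCount _ _ _ p

/-- The height of an I_G-proof: the length of its longest branch. -/
def height : ∀ (G : Fm) (Γ : Multiset Fm) (F : Fm), IGProof G Γ F → ℕ
  | _, _, _, ax _ => 1
  | _, _, _, contrL p => height _ _ _ p + 1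
  | _, _, _, botR p => height _ _ _ p + 1
  | _, _, _, andL p => height _ _ _ p + 1
  | _, _, _, andR p q => max (height _ _ _ p) (height _ _ _ q) + 1
  | _, _, _, orL p q => max (height _ _ _ p) (height _ _ _ q) + 1
  | _, _, _, orR1 p => height _ _ _ p + 1
  | _, _, _, orR2 p => height _ _ _ p + 1
  | _, _, _, impL p q => max (height _ _ _ p) (height _ _ _ q) + 1
  | _, _, _, impR p => height _ _ _ p + 1
  | _, _, _, allL _ p => height _ _ _ p + 1
  | _, _, _, exR _ p => height _ _ _ p + 1
  | _, _, _, exL _ _ _ p => height _ _ _ p + 1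
  | _, _, _, allR _ _ _ p => height _ _ _ p + 1
  | _, _, _, orLG p q => max (height _ _ _ p) (height _ _ _ q) + 1
  | _, _, _, resG p => height _ _ _ p + 1

/-- The number of sequents appearing in an I_G-proof. -/
def size : ∀ (G : Fm) (Γ : Multiset Fm) (F : Fm), IGProof G Γ F → ℕ
  | _, _, _, ax _ => 1
  | _, _, _, contrL p => size _ _ _ p + 1
  | _, _, _, botR p => size _ _ _ p + 1
  | _, _, _, andL p => size _ _ _ p + 1
  | _, _, _, andR p q => size _ _ _ p + size _ _ _ q + 1
  | _, _, _, orL p q => size _ _ _ p + size _ _ _ q + 1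
  | _, _, _, orR1 p => size _ _ _ p + 1
  | _, _, _, orR2 p => size _ _ _ p + 1
  | _, _, _, impL p q => size _ _ _ p + size _ _ _ q + 1
  | _, _, _, impR p => size _ _ _ p + 1
  | _, _, _, allL _ p => size _ _ _ p + 1
  | _, _, _, exR _ p => size _ _ _ p + 1
  | _, _, _, exL _ _ _ p => size _ _ _ p + 1
  | _, _, _, allR _ _ _ p => size _ _ _ p + 1
  | _, _, _, orLG p q => size _ _ _ p + size _ _ _ q + 1
  | _, _, _, resG p => size _ _ _ p + 1

/-- O_G-proofs: I_G-proofs containing no occurrence of the ∨-L rule, in which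
any sequent whose succedent contains a non-atomic formula occurs only as the
lower sequent of a rule introducing the top-level symbol of that formula. -/
def isOG : ∀ (G : Fm) (Γ : Multiset Fm) (F : Fm), IGProof G Γ F → Prop
  | _, _, _, ax _ => True
  | _, _, _, @contrL _ _ _ F p => F.neutral ∧ isOG _ _ _ p
  | _, _, _, @botR _ _ F p => F.neutral ∧ isOG _ _ _ p
  | _, _, _, @andL _ _ _ _ F p => F.neutral ∧ isOG _ _ _ p
  | _, _, _, andR p q => isOG _ _ _ p ∧ isOG _ _ _ q
  | _, _, _, orL _ _ => False
  | _, _, _, orR1 p => isOG _ _ _ p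
  | _, _, _, orR2 p => isOG _ _ _ p
  | _, _, _, @impL _ _ _ _ F p q => F.neutral ∧ isOG _ _ _ p ∧ isOG _ _ _ q
  | _, _, _, impR p => isOG _ _ _ p
  | _, _, _, @allL _ _ _ F _ p => F.neutral ∧ isOG _ _ _ p
  | _, _, _, exR _ p => isOG _ _ _ p
  | _, _, _, @exL _ _ _ F _ _ _ p => F.neutral ∧ isOG _ _ _ p
  | _, _, _, allR _ _ _ p => isOG _ _ _ p
  | _, _, _, @orLG _ _ _ _ F p q => F.neutral ∧ isOG _ _ _ p ∧ isOG _ _ _ q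
  | _, _, _, @resG _ _ F p => F.neutral ∧ isOG _ _ _ p

/-- `hasOrL p B D S F` holds when an ∨-L rule with upper sequents `B,S → F`
and `D,S → F` and lower sequent `B∨D,S → F` occurs in the I_G-proof `p`. -/
def hasOrL : ∀ (G : Fm) (Γ : Multiset Fm) (W : Fm), IGProof G Γ W →
    Fm → Fm → Multiset Fm → Fm → Prop
  | _, _, _, ax _, _, _, _, _ => False
  | _, _, _, contrL p, B, D, S, F => hasOrL _ _ _ p B D S F
  | _, _, _, botR p, B, D, S, F => hasOrL _ _ _ p B D S F
  | _, _, _, andL p, B, D, S, F => hasOrL _ _ _ p B D S F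
  | _, _, _, andR p q, B, D, S, F => hasOrL _ _ _ p B D S F ∨ hasOrL _ _ _ q B D S F
  | _, _, _, @orL _ B' D' Γ' F' p q, B, D, S, F =>
      (B' = B ∧ D' = D ∧ Γ' = S ∧ F' = F) ∨ hasOrL _ _ _ p B D S F ∨ hasOrL _ _ _ q B D S F
  | _, _, _, orR1 p, B, D, S, F => hasOrL _ _ _ p B D S F
  | _, _, _, orR2 p, B, D, S, F => hasOrL _ _ _ p B D S F
  | _, _, _, impL p q, B, D, S, F => hasOrL _ _ _ p B D S F ∨ hasOrL _ _ _ q B D S F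
  | _, _, _, impR p, B, D, S, F => hasOrL _ _ _ p B D S F
  | _, _, _, allL _ p, B, D, S, F => hasOrL _ _ _ p B D S F
  | _, _, _, exR _ p, B, D, S, F => hasOrL _ _ _ p B D S F
  | _, _, _, exL _ _ _ p, B, D, S, F => hasOrL _ _ _ p B D S F
  | _, _, _, allR _ _ _ p, B, D, S, F => hasOrL _ _ _ p B D S F
  | _, _, _, orLG p q, B, D, S, F => hasOrL _ _ _ p B D S F ∨ hasOrL _ _ _ q B D S F
  | _, _, _, resG p, B, D, S, F => hasOrL _ _ _ p B D S F

end IGProof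

/-- In the simplified syntax, `A` ranges over atomic formulas together with
⊤ and ⊥. -/
def AtFm (F : Fm) : Prop := F.isAtom ∨ F = Fm.top ∨ F = Fm.bot

/-- `disjs A [B₁,…,Bₙ]` is the disjunction `A ∨ B₁ ∨ … ∨ Bₙ`. -/
def disjs (A : Fm) : List Fm → Fm
  | [] => A
  | B :: l => Fm.disj A (disjs B l)

mutual
  /-- Goals in the simplified syntax: G ::= A | G∧G | G∨G | D⊃G | ∃x G. -/
  inductive Goal : Fm → Prop
    | atm {A : Fm} : AtFm A → Goal A
    | conj {a b : Fm} : Goal a → Goal b → Goal (Fm.conj a b)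
    | disj {a b : Fm} : Goal a → Goal b → Goal (Fm.disj a b)
    | imp {a b : Fm} : PCl a → Goal b → Goal (Fm.imp a b)
    | ex {a : Fm} : Goal a → Goal (Fm.ex a)

  /-- Program clauses in the simplified syntax:
  D ::= (A∨…∨A) | G⊃(A∨…∨A) | ∀x D. -/
  inductive PCl : Fm → Prop
    | head {A : Fm} {l : List Fm} : AtFm A → (∀ B ∈ l, AtFm B) → PCl (disjs A l)
    | impHead {g A : Fm} {l : List Fm} : Goal g → AtFm A → (∀ B ∈ l, AtFm B) →
        PCl (Fm.imp g (disjs A l))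
    | all {d : Fm} : PCl d → PCl (Fm.all d)
end

/-- The instances `[D]` of a program clause `D`, as pairs whose first
component is `∅` (`none`) or `{G}` (`some G`) and whose second component is
the collection of head atoms. -/
inductive ClInst : Fm → Option Fm → Multiset Fm → Prop
  | head {A : Fm} {l : List Fm} : AtFm A → (∀ B ∈ l, AtFm B) →
      ClInst (disjs A l) none (A ::ₘ (l : Multiset Fm))
  | impHead {g A : Fm} {l : List Fm} : Goal g → AtFm A → (∀ B ∈ l, AtFm B) →
      ClInst (Fm.imp g (disjs A l)) (some g) (A ::ₘ (l : Multiset Fm))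
  | all {d : Fm} {o : Option Fm} {m : Multiset Fm} (t : Tm) :
      ClInst (d.inst t) o m → ClInst (Fm.all d) o m

/-- `[Γ]`: the instances of the clauses in `Γ`. -/
def GammaInst (Γ : Multiset Fm) (o : Option Fm) (m : Multiset Fm) : Prop :=
  ∃ D ∈ Γ, ClInst D o m

/-- The reduced proof system relative to the goal `G`: axioms `Δ → ⊤`, the
rules RESTART, ATOMIC and BACKCHAIN relativized to `G`, and ∨-R, ∧-R, ⊃-R
and ∃-R. -/
inductive RP (G : Fm) : Multiset Fm → Fm → Prop
  | topAx {Γ : Multiset Fm} : RP G Γ Fm.top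
  | restart {Γ : Multiset Fm} {C : Fm} (hC : C.isAtom ∨ C = Fm.bot) (p : RP G Γ G) :
      RP G Γ C
  | atomic {Γ : Multiset Fm} {C : Fm} {m : Multiset Fm} (hC : C.isAtom ∨ C = Fm.bot)
      (h : GammaInst Γ none (C ::ₘ m) ∨ GammaInst Γ none (Fm.bot ::ₘ m))
      (ps : ∀ A ∈ m, RP G (A ::ₘ Γ) G) : RP G Γ C
  | backchain {Γ : Multiset Fm} {C G' : Fm} {m : Multiset Fm}
      (hC : C.isAtom ∨ C = Fm.bot)
      (h : GammaInst Γ (some G') (C ::ₘ m) ∨ GammaInst Γ (some G') (Fm.bot ::ₘ m))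
      (p : RP G Γ G') (ps : ∀ A ∈ m, RP G (A ::ₘ Γ) G) : RP G Γ C
  | orR1 {Γ : Multiset Fm} {B D : Fm} (p : RP G Γ B) : RP G Γ (B.disj D)
  | orR2 {Γ : Multiset Fm} {B D : Fm} (p : RP G Γ D) : RP G Γ (B.disj D)
  | andR {Γ : Multiset Fm} {B D : Fm} (p : RP G Γ B) (q : RP G Γ D) : RP G Γ (B.conj D)
  | impR {Γ : Multiset Fm} {B D : Fm} (p : RP G (B ::ₘ Γ) D) : RP G Γ (B.imp D)
  | exR {Γ : Multiset Fm} {B : Fm} (t : Tm) (p : RP G Γ (B.inst t)) : RP G Γ (Fm.ex B)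

/-! ### Auxiliary machinery for Statement 14 -/

namespace Tm

/-- Rename constant `c` to `c'`. -/
def rename (c c' : ℕ) : Tm → Tm
  | var n => var n
  | const d => const (if d = c then c' else d)

/-- A bound on the constants occurring in a term. -/
def maxC : Tm → ℕ
  | var _ => 0
  | const d => d

lemma rename_subst (c c' k : ℕ) (u t : Tm) :
    rename c c' (subst k u t) = subst k (rename c c' u) (rename c c' t) := by
  cases t with
  | var n => by_cases h : n = k <;> simp [subst, rename, h]
  | const d => simp [subst, rename]

lemma rename_id {c : ℕ} (c' : ℕ) {t : Tm} (h : ¬ t.constIn c) : rename c c' t = t := by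
  cases t with
  | var n => rfl
  | const d =>
    simp only [constIn] at h
    simp [rename, h]

lemma constIn_rename {d c c' : ℕ} {t : Tm} (h : (rename c c' t).constIn d) :
    t.constIn d ∨ d = c' := by
  cases t with
  | var n => simp [rename, constIn] at h
  | const e =>
    simp only [rename, constIn] at h ⊢
    split at h <;> omega

lemma not_constIn_of_maxC_lt {d : ℕ} {t : Tm} (h : t.maxC < d) : ¬ t.constIn d := by
  cases t with
  | var n => simp [constIn]
  | const e => simp only [maxC] at h; simp [constIn]; omega

end Tm

namespace Fm

/-- Rename constant `c` to `c'`. -/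
def rename (c c' : ℕ) : Fm → Fm
  | top => top
  | bot => bot
  | atom p ts => atom p (ts.map (Tm.rename c c'))
  | conj a b => conj (rename c c' a) (rename c c' b)
  | disj a b => disj (rename c c' a) (rename c c' b)
  | imp a b => imp (rename c c' a) (rename c c' b)
  | ex a => ex (rename c c' a)
  | all a => all (rename c c' a)

/-- A bound on the constants occurring in a formula. -/
def maxC : Fm → ℕ
  | top => 0
  | bot => 0
  | atom _ ts => (ts.map Tm.maxC).sum
  | conj a b => maxC a + maxC b
  | disj a b => maxC a + maxC b
  | imp a b => maxC a + maxC b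
  | ex a => maxC a
  | all a => maxC a

lemma rename_subst (c c' : ℕ) (u : Tm) (F : Fm) : ∀ k,
    rename c c' (subst k u F) = subst k (Tm.rename c c' u) (rename c c' F) := by
  induction F with
  | top => intro k; rfl
  | bot => intro k; rfl
  | atom p ts =>
    intro k
    simp only [subst, rename, List.map_map]
    exact congrArg (atom p) (by
      apply List.map_congr_left
      intro t _
      exact Tm.rename_subst c c' k u t)
  | conj a b iha ihb => intro k; simp [subst, rename, iha, ihb]
  | disj a b iha ihb => intro k; simp [subst, rename, iha, ihb]
  | imp a b iha ihb => intro k; simp [subst, rename, iha, ihb]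
  | ex a iha => intro k; simp [subst, rename, iha]
  | all a iha => intro k; simp [subst, rename, iha]

lemma rename_inst (c c' : ℕ) (u : Tm) (F : Fm) :
    rename c c' (F.inst u) = (rename c c' F).inst (Tm.rename c c' u) :=
  rename_subst c c' u F 0

lemma rename_id {c : ℕ} (c' : ℕ) : ∀ {F : Fm}, ¬ F.constIn c → rename c c' F = F := by
  intro F
  induction F with
  | top => intro _; rfl
  | bot => intro _; rfl
  | atom p ts =>
    intro h
    simp only [constIn] at h
    push_neg at h
    simp only [rename, atom.injEq, true_and]
    calc ts.map (Tm.rename c c') = ts.map id := List.map_congr_left fun t ht => Tm.rename_id c' (h t ht)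
      _ = ts := List.map_id ts
  | conj a b iha ihb =>
    intro h; simp only [constIn] at h; push_neg at h
    simp [rename, iha h.1, ihb h.2]
  | disj a b iha ihb =>
    intro h; simp only [constIn] at h; push_neg at h
    simp [rename, iha h.1, ihb h.2]
  | imp a b iha ihb =>
    intro h; simp only [constIn] at h; push_neg at h
    simp [rename, iha h.1, ihb h.2]
  | ex a iha => intro h; simp only [constIn] at h; simp [rename, iha h]
  | all a iha => intro h; simp only [constIn] at h; simp [rename, iha h]

lemma constIn_rename {d c c' : ℕ} : ∀ {F : Fm}, (rename c c' F).constIn d →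
    F.constIn d ∨ d = c' := by
  intro F
  induction F with
  | top => intro h; exact absurd h (by simp [rename, constIn])
  | bot => intro h; exact absurd h (by simp [rename, constIn])
  | atom p ts =>
    intro h
    simp only [rename, constIn] at h ⊢
    obtain ⟨t, ht, hc⟩ := h
    obtain ⟨t0, ht0, rfl⟩ := List.mem_map.1 ht
    rcases Tm.constIn_rename hc with h | h
    · exact Or.inl ⟨t0, ht0, h⟩
    · exact Or.inr h
  | conj a b iha ihb =>
    intro h; simp only [rename, constIn] at h ⊢
    rcases h with h | h
    · rcases iha h with h | h
      · exact Or.inl (Or.inl h)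
      · exact Or.inr h
    · rcases ihb h with h | h
      · exact Or.inl (Or.inr h)
      · exact Or.inr h
  | disj a b iha ihb =>
    intro h; simp only [rename, constIn] at h ⊢
    rcases h with h | h
    · rcases iha h with h | h
      · exact Or.inl (Or.inl h)
      · exact Or.inr h
    · rcases ihb h with h | h
      · exact Or.inl (Or.inr h)
      · exact Or.inr h
  | imp a b iha ihb =>
    intro h; simp only [rename, constIn] at h ⊢
    rcases h with h | h
    · rcases iha h with h | h
      · exact Or.inl (Or.inl h)
      · exact Or.inr h
    · rcases ihb h with h | h
      · exact Or.inl (Or.inr h)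
      · exact Or.inr h
  | ex a iha => intro h; simp only [rename, constIn] at h ⊢; exact iha h
  | all a iha => intro h; simp only [rename, constIn] at h ⊢; exact iha h

lemma not_constIn_of_maxC_lt {d : ℕ} : ∀ {F : Fm}, F.maxC < d → ¬ F.constIn d := by
  intro F
  induction F with
  | top => intro _; simp [constIn]
  | bot => intro _; simp [constIn]
  | atom p ts =>
    intro h
    simp only [constIn]
    rintro ⟨t, ht, hc⟩
    have : t.maxC ≤ (ts.map Tm.maxC).sum :=
      List.single_le_sum (fun x _ => Nat.zero_le x) _ (List.mem_map_of_mem ht)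
    exact Tm.not_constIn_of_maxC_lt (by simp only [maxC] at h; omega) hc
  | conj a b iha ihb =>
    intro h
    simp only [maxC] at h
    simp only [constIn]
    rintro (hc | hc)
    · exact iha (by omega) hc
    · exact ihb (by omega) hc
  | disj a b iha ihb =>
    intro h
    simp only [maxC] at h
    simp only [constIn]
    rintro (hc | hc)
    · exact iha (by omega) hc
    · exact ihb (by omega) hc
  | imp a b iha ihb =>
    intro h
    simp only [maxC] at h
    simp only [constIn]
    rintro (hc | hc)
    · exact iha (by omega) hc
    · exact ihb (by omega) hc
  | ex a iha => intro h; simp only [maxC] at h; simp only [constIn]; exact iha h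
  | all a iha => intro h; simp only [maxC] at h; simp only [constIn]; exact iha h

end Fm

/-- A bound on the constants occurring in a multiset of formulas. -/
def maxCM (Δ : Multiset Fm) : ℕ := (Δ.map Fm.maxC).sum

lemma maxC_le_maxCM {A : Fm} {Δ : Multiset Fm} (h : A ∈ Δ) : A.maxC ≤ maxCM Δ :=
  Multiset.single_le_sum (fun _ _ => Nat.zero_le _) _ (Multiset.mem_map_of_mem _ h)

lemma mapRename_id {c : ℕ} (c' : ℕ) {Δ : Multiset Fm} (h : ∀ A ∈ Δ, ¬ Fm.constIn c A) :
    Δ.map (Fm.rename c c') = Δ := by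
  calc Δ.map (Fm.rename c c') = Δ.map id :=
        Multiset.map_congr rfl fun A hA => Fm.rename_id c' (h A hA)
    _ = Δ := Multiset.map_id Δ

lemma AxSeq.rename (c c' : ℕ) {Γ Δ : Multiset Fm} (h : AxSeq Γ Δ) :
    AxSeq (Γ.map (Fm.rename c c')) (Δ.map (Fm.rename c c')) := by
  rcases h with h | ⟨A, hA, h1, h2⟩
  · exact Or.inl (Multiset.mem_map.2 ⟨Fm.top, h, rfl⟩)
  · refine Or.inr ⟨Fm.rename c c' A, ?_, Multiset.mem_map_of_mem _ h1, Multiset.mem_map_of_mem _ h2⟩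
    rcases hA with rfl | hA
    · exact Or.inl rfl
    · cases A <;> simp [Fm.isAtom, Fm.rename] at hA ⊢
/-! ### MsGe lemmas -/

lemma relGe_refl (Δ : Multiset Fm) : Multiset.Rel Fm.ge Δ Δ := by
  induction Δ using Multiset.induction with
  | empty => exact Multiset.Rel.zero
  | cons A Δ ih => exact Multiset.Rel.cons (Fm.ge.refl A) ih

lemma msge_refl (Δ : Multiset Fm) : MsGe Δ Δ := ⟨Δ, le_refl _, relGe_refl Δ⟩

lemma msge_cons {F1 F2 : Fm} {Δ' Δ : Multiset Fm} (h : Fm.ge F1 F2) (hm : MsGe Δ' Δ) :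
    MsGe (F1 ::ₘ Δ') (F2 ::ₘ Δ) := by
  obtain ⟨Γ', hle, hrel⟩ := hm
  exact ⟨F1 ::ₘ Γ', Multiset.cons_le_cons _ hle, Multiset.Rel.cons h hrel⟩

lemma msge_dest {Δ' Δ : Multiset Fm} {B : Fm} (h : MsGe Δ' (B ::ₘ Δ)) :
    ∃ F1 Γ'', Δ' = F1 ::ₘ Γ'' ∧ Fm.ge F1 B ∧ MsGe Γ'' Δ := by
  obtain ⟨Γ', hle, hrel⟩ := h
  rw [Multiset.rel_cons_right] at hrel
  obtain ⟨a, m', hab, hrel', rfl⟩ := hrel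
  obtain ⟨k, hk⟩ := Multiset.le_iff_exists_add.1 hle
  refine ⟨a, m' + k, by rw [hk, Multiset.cons_add], hab, m', Multiset.le_add_right _ _, hrel'⟩

lemma msge_mem {A : Fm} {Δ Δ' : Multiset Fm} (h : MsGe Δ' Δ) (hA : A ∈ Δ) :
    ∃ F1 ∈ Δ', Fm.ge F1 A := by
  obtain ⟨t, rfl⟩ := Multiset.exists_cons_of_mem hA
  obtain ⟨F1, Γ'', heq, hge, -⟩ := msge_dest h
  exact ⟨F1, heq ▸ Multiset.mem_cons_self _ _, hge⟩

/-! ### Renaming I_G-proofs -/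

/-- Transport an existential statement about proofs along equalities of the
end-sequent. -/
lemma cast_ex {G : Fm} {Δ₂ Δ₁ : Multiset Fm} {F₂ F₁ : Fm} (hΔ : Δ₂ = Δ₁) (hF : F₂ = F₁)
    {n m : ℕ} (h : ∃ q : IGProof G Δ₁ F₁, q.orLCount ≤ n ∧ q.height ≤ m) :
    ∃ q : IGProof G Δ₂ F₂, q.orLCount ≤ n ∧ q.height ≤ m := by
  subst hΔ; subst hF; exact h

lemma cast_ex' {G : Fm} {Δ₂ Δ₁ : Multiset Fm} {F₂ F₁ : Fm} (hΔ : Δ₂ = Δ₁) (hF : F₂ = F₁)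
    {n : ℕ} (h : ∃ q : IGProof G Δ₁ F₁, q.orLCount ≤ n) :
    ∃ q : IGProof G Δ₂ F₂, q.orLCount ≤ n := by
  subst hΔ; subst hF; exact h

lemma castSeq {G : Fm} {Δ₁ Δ₂ : Multiset Fm} {F₁ F₂ : Fm} (hΔ : Δ₁ = Δ₂) (hF : F₁ = F₂)
    (p : IGProof G Δ₁ F₁) :
    ∃ q : IGProof G Δ₂ F₂, q.orLCount = p.orLCount ∧ q.height = p.height := by
  subst hΔ; subst hF; exact ⟨p, rfl, rfl⟩

lemma renameIG (G : Fm) : ∀ n : ℕ, ∀ c c' : ℕ, ¬ G.constIn c →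
    ∀ (Δ : Multiset Fm) (F : Fm) (p : IGProof G Δ F), p.height ≤ n →
    ∃ q : IGProof G (Δ.map (Fm.rename c c')) (F.rename c c'),
      q.orLCount ≤ p.orLCount ∧ q.height ≤ p.height := by
  intro n
  induction n with
  | zero =>
    intro c c' hGc Δ F p hp
    exact absurd hp (by cases p <;> simp [IGProof.height])
  | succ n ih =>
    intro c c' hGc Δ F p hp
    cases p with
    | ax h =>
      have h' : AxSeq (Δ.map (Fm.rename c c')) ({Fm.rename c c' F} : Multiset Fm) := by
        simpa using AxSeq.rename c c' h
      exact ⟨.ax h', by simp [IGProof.orLCount], by simp [IGProof.height]⟩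
    | @contrL B Γ _ p =>
      simp only [IGProof.height] at hp
      obtain ⟨q, h1, h2⟩ := ih c c' hGc _ _ p (by omega)
      obtain ⟨q', e1, e2⟩ := castSeq (show Multiset.map (Fm.rename c c') (B ::ₘ B ::ₘ Γ)
        = Fm.rename c c' B ::ₘ Fm.rename c c' B ::ₘ Multiset.map (Fm.rename c c') Γ by simp)
        rfl q
      refine cast_ex (show Multiset.map (Fm.rename c c') (B ::ₘ Γ)
        = Fm.rename c c' B ::ₘ Multiset.map (Fm.rename c c') Γ by simp) rfl ⟨.contrL q', ?_, ?_⟩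
      · simp only [IGProof.orLCount]; omega
      · simp only [IGProof.height]; omega
    | @botR _ _ p =>
      simp only [IGProof.height] at hp
      obtain ⟨q, h1, h2⟩ := ih c c' hGc _ _ p (by omega)
      obtain ⟨q', e1, e2⟩ := castSeq rfl (show Fm.rename c c' Fm.bot = Fm.bot from rfl) q
      refine ⟨.botR q', ?_, ?_⟩
      · simp only [IGProof.orLCount]; omega
      · simp only [IGProof.height]; omega
    | @andL B D Γ _ p =>
      simp only [IGProof.height] at hp
      obtain ⟨q, h1, h2⟩ := ih c c' hGc _ _ p (by omega)
      obtain ⟨q', e1, e2⟩ := castSeq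
        (show Multiset.map (Fm.rename c c') (B ::ₘ D ::ₘ B.conj D ::ₘ Γ)
          = Fm.rename c c' B ::ₘ Fm.rename c c' D ::ₘ
            (Fm.rename c c' B).conj (Fm.rename c c' D) ::ₘ Multiset.map (Fm.rename c c') Γ
          by simp [Fm.rename]) rfl q
      refine cast_ex (show Multiset.map (Fm.rename c c') (B.conj D ::ₘ Γ)
        = (Fm.rename c c' B).conj (Fm.rename c c' D) ::ₘ Multiset.map (Fm.rename c c') Γ by simp [Fm.rename]) rfl
        ⟨.andL q', ?_, ?_⟩
      · simp only [IGProof.orLCount]; omega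
      · simp only [IGProof.height]; omega
    | @andR B D _ p q =>
      simp only [IGProof.height] at hp
      obtain ⟨q1, h1, h2⟩ := ih c c' hGc _ _ p (by omega)
      obtain ⟨q2, h3, h4⟩ := ih c c' hGc _ _ q (by omega)
      refine cast_ex rfl (show Fm.rename c c' (B.conj D) = (Fm.rename c c' B).conj (Fm.rename c c' D) from rfl)
        ⟨.andR q1 q2, ?_, ?_⟩
      · simp only [IGProof.orLCount]; omega
      · simp only [IGProof.height]; omega
    | @orL B D Γ _ p q =>
      simp only [IGProof.height] at hp
      obtain ⟨q1, h1, h2⟩ := ih c c' hGc _ _ p (by omega)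
      obtain ⟨q2, h3, h4⟩ := ih c c' hGc _ _ q (by omega)
      obtain ⟨q1', e1, e2⟩ := castSeq (show Multiset.map (Fm.rename c c') (B ::ₘ Γ)
        = Fm.rename c c' B ::ₘ Multiset.map (Fm.rename c c') Γ by simp) rfl q1
      obtain ⟨q2', e3, e4⟩ := castSeq (show Multiset.map (Fm.rename c c') (D ::ₘ Γ)
        = Fm.rename c c' D ::ₘ Multiset.map (Fm.rename c c') Γ by simp) rfl q2
      refine cast_ex (show Multiset.map (Fm.rename c c') (B.disj D ::ₘ Γ)
        = (Fm.rename c c' B).disj (Fm.rename c c' D) ::ₘ Multiset.map (Fm.rename c c') Γ by simp [Fm.rename]) rfl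
        ⟨.orL q1' q2', ?_, ?_⟩
      · simp only [IGProof.orLCount]; omega
      · simp only [IGProof.height]; omega
    | @orR1 B D _ p =>
      simp only [IGProof.height] at hp
      obtain ⟨q1, h1, h2⟩ := ih c c' hGc _ _ p (by omega)
      refine cast_ex rfl (show Fm.rename c c' (B.disj D) = (Fm.rename c c' B).disj (Fm.rename c c' D) from rfl)
        ⟨.orR1 q1, ?_, ?_⟩
      · simp only [IGProof.orLCount]; omega
      · simp only [IGProof.height]; omega
    | @orR2 B D _ p =>
      simp only [IGProof.height] at hp
      obtain ⟨q1, h1, h2⟩ := ih c c' hGc _ _ p (by omega)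
      refine cast_ex rfl (show Fm.rename c c' (B.disj D) = (Fm.rename c c' B).disj (Fm.rename c c' D) from rfl)
        ⟨.orR2 q1, ?_, ?_⟩
      · simp only [IGProof.orLCount]; omega
      · simp only [IGProof.height]; omega
    | @impL B D Γ _ p q =>
      simp only [IGProof.height] at hp
      obtain ⟨q1, h1, h2⟩ := ih c c' hGc _ _ p (by omega)
      obtain ⟨q2, h3, h4⟩ := ih c c' hGc _ _ q (by omega)
      obtain ⟨q1', e1, e2⟩ := castSeq (show Multiset.map (Fm.rename c c') (B.imp D ::ₘ Γ)
        = (Fm.rename c c' B).imp (Fm.rename c c' D) ::ₘ Multiset.map (Fm.rename c c') Γ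
        by simp [Fm.rename]) rfl q1
      obtain ⟨q2', e3, e4⟩ := castSeq (show Multiset.map (Fm.rename c c') (D ::ₘ Γ)
        = Fm.rename c c' D ::ₘ Multiset.map (Fm.rename c c') Γ by simp) rfl q2
      refine cast_ex (show Multiset.map (Fm.rename c c') (B.imp D ::ₘ Γ)
        = (Fm.rename c c' B).imp (Fm.rename c c' D) ::ₘ Multiset.map (Fm.rename c c') Γ by simp [Fm.rename]) rfl
        ⟨.impL q1' q2', ?_, ?_⟩
      · simp only [IGProof.orLCount]; omega
      · simp only [IGProof.height]; omega
    | @impR B D _ p =>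
      simp only [IGProof.height] at hp
      obtain ⟨q1, h1, h2⟩ := ih c c' hGc _ _ p (by omega)
      obtain ⟨q1', e1, e2⟩ := castSeq (show Multiset.map (Fm.rename c c') (B ::ₘ Δ)
        = Fm.rename c c' B ::ₘ Multiset.map (Fm.rename c c') Δ by simp) rfl q1
      refine cast_ex rfl (show Fm.rename c c' (B.imp D) = (Fm.rename c c' B).imp (Fm.rename c c' D) from rfl)
        ⟨.impR q1', ?_, ?_⟩
      · simp only [IGProof.orLCount]; omega
      · simp only [IGProof.height]; omega
    | @allL B Γ _ t p =>
      simp only [IGProof.height] at hp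
      obtain ⟨q1, h1, h2⟩ := ih c c' hGc _ _ p (by omega)
      obtain ⟨q1', e1, e2⟩ := castSeq
        (show Multiset.map (Fm.rename c c') (B.inst t ::ₘ Fm.all B ::ₘ Γ)
          = (Fm.rename c c' B).inst (Tm.rename c c' t) ::ₘ Fm.all (Fm.rename c c' B) ::ₘ
            Multiset.map (Fm.rename c c') Γ
          by simp [Fm.rename, Fm.rename_inst]) rfl q1
      refine cast_ex (show Multiset.map (Fm.rename c c') (Fm.all B ::ₘ Γ)
        = Fm.all (Fm.rename c c' B) ::ₘ Multiset.map (Fm.rename c c') Γ by simp [Fm.rename]) rfl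
        ⟨.allL (Tm.rename c c' t) q1', ?_, ?_⟩
      · simp only [IGProof.orLCount]; omega
      · simp only [IGProof.height]; omega
    | @exR B _ t p =>
      simp only [IGProof.height] at hp
      obtain ⟨q1, h1, h2⟩ := ih c c' hGc _ _ p (by omega)
      obtain ⟨q1', e1, e2⟩ := castSeq rfl (Fm.rename_inst c c' t B) q1
      refine cast_ex rfl (show Fm.rename c c' (Fm.ex B) = Fm.ex (Fm.rename c c' B) from rfl)
        ⟨.exR (Tm.rename c c' t) q1', ?_, ?_⟩
      · simp only [IGProof.orLCount]; omega
      · simp only [IGProof.height]; omega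
    | @exL B Γ _ d hc hGd p =>
      simp only [IGProof.height] at hp
      set e : ℕ := Fm.maxC B + maxCM Γ + Fm.maxC F + Fm.maxC G + c + c' + 1 with he
      have hdB' : ¬ (Fm.ex B).constIn d := hc.1 _ (Multiset.mem_cons_self _ _)
      have hdB : ¬ B.constIn d := hdB'
      have hdΓ : ∀ A ∈ Γ, ¬ A.constIn d := fun A hA => hc.1 A (Multiset.mem_cons_of_mem hA)
      have hdF : ¬ F.constIn d := hc.2 F (Multiset.mem_singleton_self F)
      have heB : ¬ B.constIn e := Fm.not_constIn_of_maxC_lt (by omega)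
      have heΓ : ∀ A ∈ Γ, ¬ A.constIn e := fun A hA =>
        Fm.not_constIn_of_maxC_lt (by have := maxC_le_maxCM hA; omega)
      have heF : ¬ F.constIn e := Fm.not_constIn_of_maxC_lt (by omega)
      have heG : ¬ G.constIn e := Fm.not_constIn_of_maxC_lt (by omega)
      have hec : e ≠ c := by omega
      have hec' : e ≠ c' := by omega
      obtain ⟨q1, hq1c, hq1h⟩ := ih d e hGd _ _ p (by omega)
      obtain ⟨q1', e1, e2⟩ := castSeq
        (show Multiset.map (Fm.rename d e) (B.inst (Tm.const d) ::ₘ Γ)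
          = B.inst (Tm.const e) ::ₘ Γ by
            rw [Multiset.map_cons, Fm.rename_inst, Fm.rename_id e hdB, mapRename_id e hdΓ]
            simp [Tm.rename]) (Fm.rename_id e hdF) q1
      obtain ⟨q2, hq2c, hq2h⟩ := ih c c' hGc _ _ q1' (by omega)
      obtain ⟨q2', e3, e4⟩ := castSeq
        (show Multiset.map (Fm.rename c c') (B.inst (Tm.const e) ::ₘ Γ)
          = (Fm.rename c c' B).inst (Tm.const e) ::ₘ Multiset.map (Fm.rename c c') Γ by
            rw [Multiset.map_cons, Fm.rename_inst]
            simp [Tm.rename, hec]) rfl q2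
      have hfresh : FreshSeq e ((Fm.ex (Fm.rename c c' B)) ::ₘ Γ.map (Fm.rename c c'))
          ({Fm.rename c c' F} : Multiset Fm) := by
        constructor
        · intro A hA
          rcases Multiset.mem_cons.1 hA with rfl | hA
          · intro hcon
            have hcon' : (Fm.rename c c' B).constIn e := hcon
            rcases Fm.constIn_rename hcon' with h | h
            · exact heB h
            · exact hec' h
          · obtain ⟨A0, hA0, rfl⟩ := Multiset.mem_map.1 hA
            intro hcon
            rcases Fm.constIn_rename hcon with h | h
            · exact heΓ A0 hA0 h
            · exact hec' h
        · intro A hA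
          rw [Multiset.mem_singleton] at hA
          subst hA
          intro hcon
          rcases Fm.constIn_rename hcon with h | h
          · exact heF h
          · exact hec' h
      refine cast_ex (show Multiset.map (Fm.rename c c') (Fm.ex B ::ₘ Γ)
        = Fm.ex (Fm.rename c c' B) ::ₘ Multiset.map (Fm.rename c c') Γ by simp [Fm.rename]) rfl
        ⟨.exL e hfresh heG q2', ?_, ?_⟩
      · simp only [IGProof.orLCount]; omega
      · simp only [IGProof.height]; omega
    | @allR B _ d hc hGd p =>
      simp only [IGProof.height] at hp
      set e : ℕ := Fm.maxC B + maxCM Δ + Fm.maxC G + c + c' + 1 with he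
      have hdB' : ¬ (Fm.all B).constIn d := hc.2 _ (Multiset.mem_singleton_self _)
      have hdB : ¬ B.constIn d := hdB'
      have hdΓ : ∀ A ∈ Δ, ¬ A.constIn d := hc.1
      have heB : ¬ B.constIn e := Fm.not_constIn_of_maxC_lt (by omega)
      have heΓ : ∀ A ∈ Δ, ¬ A.constIn e := fun A hA =>
        Fm.not_constIn_of_maxC_lt (by have := maxC_le_maxCM hA; omega)
      have heG : ¬ G.constIn e := Fm.not_constIn_of_maxC_lt (by omega)
      have hec : e ≠ c := by omega
      have hec' : e ≠ c' := by omega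
      obtain ⟨q1, hq1c, hq1h⟩ := ih d e hGd _ _ p (by omega)
      obtain ⟨q1', e1, e2⟩ := castSeq (mapRename_id e hdΓ)
        (show Fm.rename d e (B.inst (Tm.const d)) = B.inst (Tm.const e) by
          rw [Fm.rename_inst, Fm.rename_id e hdB]; simp [Tm.rename]) q1
      obtain ⟨q2, hq2c, hq2h⟩ := ih c c' hGc _ _ q1' (by omega)
      obtain ⟨q2', e3, e4⟩ := castSeq rfl
        (show Fm.rename c c' (B.inst (Tm.const e))
          = (Fm.rename c c' B).inst (Tm.const e) by
            rw [Fm.rename_inst]; simp [Tm.rename, hec]) q2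
      have hfresh : FreshSeq e (Δ.map (Fm.rename c c'))
          ({Fm.all (Fm.rename c c' B)} : Multiset Fm) := by
        constructor
        · intro A hA
          obtain ⟨A0, hA0, rfl⟩ := Multiset.mem_map.1 hA
          intro hcon
          rcases Fm.constIn_rename hcon with h | h
          · exact heΓ A0 hA0 h
          · exact hec' h
        · intro A hA
          rw [Multiset.mem_singleton] at hA
          subst hA
          intro hcon
          have hcon' : (Fm.rename c c' B).constIn e := hcon
          rcases Fm.constIn_rename hcon' with h | h
          · exact heB h
          · exact hec' h
      refine cast_ex rfl (show Fm.rename c c' (Fm.all B) = Fm.all (Fm.rename c c' B) from rfl)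
        ⟨.allR e hfresh heG q2', ?_, ?_⟩
      · simp only [IGProof.orLCount]; omega
      · simp only [IGProof.height]; omega
    | @orLG B D Γ _ p q =>
      simp only [IGProof.height] at hp
      obtain ⟨q1, h1, h2⟩ := ih c c' hGc _ _ p (by omega)
      obtain ⟨q2, h3, h4⟩ := ih c c' hGc _ _ q (by omega)
      obtain ⟨q1', e1, e2⟩ := castSeq (show Multiset.map (Fm.rename c c') (B ::ₘ Γ)
        = Fm.rename c c' B ::ₘ Multiset.map (Fm.rename c c') Γ by simp) rfl q1
      obtain ⟨q2', e3, e4⟩ := castSeq (show Multiset.map (Fm.rename c c') (D ::ₘ Γ)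
        = Fm.rename c c' D ::ₘ Multiset.map (Fm.rename c c') Γ by simp)
        (Fm.rename_id c' hGc) q2
      refine cast_ex (show Multiset.map (Fm.rename c c') (B.disj D ::ₘ Γ)
        = (Fm.rename c c' B).disj (Fm.rename c c' D) ::ₘ Multiset.map (Fm.rename c c') Γ by simp [Fm.rename]) rfl
        ⟨.orLG q1' q2', ?_, ?_⟩
      · simp only [IGProof.orLCount]; omega
      · simp only [IGProof.height]; omega
    | @resG _ _ p =>
      simp only [IGProof.height] at hp
      obtain ⟨q1, h1, h2⟩ := ih c c' hGc _ _ p (by omega)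
      obtain ⟨q1', e1, e2⟩ := castSeq rfl (Fm.rename_id c' hGc) q1
      refine ⟨.resG q1', ?_, ?_⟩
      · simp only [IGProof.orLCount]; omega
      · simp only [IGProof.height]; omega
/-! ### Order inversion lemmas -/

lemma Fm.ge_conj {F B D : Fm} (h : Fm.ge F (Fm.conj B D)) : F = Fm.conj B D := by
  cases h; rfl

lemma Fm.ge_all {F B : Fm} (h : Fm.ge F (Fm.all B)) : F = Fm.all B := by
  cases h; rfl

/-! ### The main lemma -/

lemma mainIG (G : Fm) : ∀ n : ℕ, ∀ (Δ : Multiset Fm) (F : Fm) (p : IGProof G Δ F),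
    p.height ≤ n → ∀ Δ' : Multiset Fm, MsGe Δ' Δ →
    ∃ q : IGProof G Δ' F, q.orLCount ≤ p.orLCount := by
  intro n
  induction n with
  | zero =>
    intro Δ F p hp
    exact absurd hp (by cases p <;> simp [IGProof.height])
  | succ n ih =>
    intro Δ F p hp Δ' hΔ'
    cases p with
    | ax h =>
      rcases h with htop | ⟨A, hA, h1, h2⟩
      · exact ⟨.ax (show AxSeq Δ' ({F} : Multiset Fm) from Or.inl htop), by simp [IGProof.orLCount]⟩
      · obtain ⟨F1, hF1, hge⟩ := msge_mem hΔ' h1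
        have hFA : F1 = A := by
          rcases hA with rfl | hA
          · cases hge; rfl
          · cases A <;> try simp [Fm.isAtom] at hA
            all_goals (cases hge; rfl)
        exact ⟨.ax (show AxSeq Δ' ({F} : Multiset Fm) from Or.inr ⟨A, hA, hFA ▸ hF1, h2⟩), by simp [IGProof.orLCount]⟩
    | @contrL B Γ _ p =>
      simp only [IGProof.height] at hp
      obtain ⟨F1, Γ'', rfl, hge, hm⟩ := msge_dest hΔ'
      obtain ⟨q, hq⟩ := ih _ _ p (by omega) _ (msge_cons hge (msge_cons hge hm))
      exact ⟨.contrL q, by simp only [IGProof.orLCount]; omega⟩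
    | @botR _ _ p =>
      simp only [IGProof.height] at hp
      obtain ⟨q, hq⟩ := ih _ _ p (by omega) _ hΔ'
      exact ⟨.botR q, by simp only [IGProof.orLCount]; omega⟩
    | @andL B D Γ _ p =>
      simp only [IGProof.height] at hp
      obtain ⟨F1, Γ'', rfl, hge, hm⟩ := msge_dest hΔ'
      have hFA : F1 = B.conj D := Fm.ge_conj hge
      subst hFA
      obtain ⟨q, hq⟩ := ih _ _ p (by omega) _
        (msge_cons (Fm.ge.refl B) (msge_cons (Fm.ge.refl D)
          (msge_cons (Fm.ge.refl (B.conj D)) hm)))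
      exact ⟨.andL q, by simp only [IGProof.orLCount]; omega⟩
    | @andR B D _ p q =>
      simp only [IGProof.height] at hp
      obtain ⟨q1, hq1⟩ := ih _ _ p (by omega) _ hΔ'
      obtain ⟨q2, hq2⟩ := ih _ _ q (by omega) _ hΔ'
      exact ⟨.andR q1 q2, by simp only [IGProof.orLCount]; omega⟩
    | @orL B D Γ _ p q =>
      simp only [IGProof.height] at hp
      obtain ⟨F1, Γ'', rfl, hge, hm⟩ := msge_dest hΔ'
      cases hge with
      | refl =>
        obtain ⟨q1, hq1⟩ := ih _ _ p (by omega) _ (msge_cons (Fm.ge.refl B) hm)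
        obtain ⟨q2, hq2⟩ := ih _ _ q (by omega) _ (msge_cons (Fm.ge.refl D) hm)
        exact ⟨.orL q1 q2, by simp only [IGProof.orLCount]; omega⟩
      | disjl h =>
        obtain ⟨q1, hq1⟩ := ih _ _ p (by omega) _ (msge_cons h hm)
        exact ⟨q1, by simp only [IGProof.orLCount]; omega⟩
      | disjr h =>
        obtain ⟨q2, hq2⟩ := ih _ _ q (by omega) _ (msge_cons h hm)
        exact ⟨q2, by simp only [IGProof.orLCount]; omega⟩
    | @orR1 B D _ p =>
      simp only [IGProof.height] at hp
      obtain ⟨q1, hq1⟩ := ih _ _ p (by omega) _ hΔ'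
      exact ⟨.orR1 q1, by simp only [IGProof.orLCount]; omega⟩
    | @orR2 B D _ p =>
      simp only [IGProof.height] at hp
      obtain ⟨q1, hq1⟩ := ih _ _ p (by omega) _ hΔ'
      exact ⟨.orR2 q1, by simp only [IGProof.orLCount]; omega⟩
    | @impL B D Γ _ p q =>
      simp only [IGProof.height] at hp
      obtain ⟨F1, Γ'', rfl, hge, hm⟩ := msge_dest hΔ'
      cases hge with
      | refl =>
        obtain ⟨q1, hq1⟩ := ih _ _ p (by omega) _ (msge_cons (Fm.ge.refl (B.imp D)) hm)
        obtain ⟨q2, hq2⟩ := ih _ _ q (by omega) _ (msge_cons (Fm.ge.refl D) hm)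
        exact ⟨.impL q1 q2, by simp only [IGProof.orLCount]; omega⟩
      | imp h =>
        obtain ⟨q2, hq2⟩ := ih _ _ q (by omega) _ (msge_cons h hm)
        exact ⟨q2, by simp only [IGProof.orLCount]; omega⟩
    | @impR B D _ p =>
      simp only [IGProof.height] at hp
      obtain ⟨q1, hq1⟩ := ih _ _ p (by omega) _ (msge_cons (Fm.ge.refl B) hΔ')
      exact ⟨.impR q1, by simp only [IGProof.orLCount]; omega⟩
    | @allL B Γ _ t p =>
      simp only [IGProof.height] at hp
      obtain ⟨F1, Γ'', rfl, hge, hm⟩ := msge_dest hΔ'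
      have hFA : F1 = Fm.all B := Fm.ge_all hge
      subst hFA
      obtain ⟨q, hq⟩ := ih _ _ p (by omega) _
        (msge_cons (Fm.ge.refl (B.inst t)) (msge_cons (Fm.ge.refl (Fm.all B)) hm))
      exact ⟨.allL t q, by simp only [IGProof.orLCount]; omega⟩
    | @exR B _ t p =>
      simp only [IGProof.height] at hp
      obtain ⟨q1, hq1⟩ := ih _ _ p (by omega) _ hΔ'
      exact ⟨.exR t q1, by simp only [IGProof.orLCount]; omega⟩
    | @exL B Γ _ d hc hGd p =>
      simp only [IGProof.height] at hp
      obtain ⟨F1, Γ'', rfl, hge, hm⟩ := msge_dest hΔ'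
      have hdB' : ¬ (Fm.ex B).constIn d := hc.1 _ (Multiset.mem_cons_self _ _)
      have hdB : ¬ B.constIn d := hdB'
      have hdΓ : ∀ A ∈ Γ, ¬ A.constIn d := fun A hA => hc.1 A (Multiset.mem_cons_of_mem hA)
      have hdF : ¬ F.constIn d := hc.2 F (Multiset.mem_singleton_self F)
      cases hge with
      | refl =>
        set e : ℕ := Fm.maxC B + maxCM Γ'' + Fm.maxC F + Fm.maxC G + 1 with he
        have heB : ¬ B.constIn e := Fm.not_constIn_of_maxC_lt (by omega)
        have heΓ'' : ∀ A ∈ Γ'', ¬ A.constIn e := fun A hA =>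
          Fm.not_constIn_of_maxC_lt (by have := maxC_le_maxCM hA; omega)
        have heF : ¬ F.constIn e := Fm.not_constIn_of_maxC_lt (by omega)
        have heG : ¬ G.constIn e := Fm.not_constIn_of_maxC_lt (by omega)
        obtain ⟨q1, hq1c, hq1h⟩ := renameIG G n d e hGd _ _ p (by omega)
        obtain ⟨q1', e1, e2⟩ := castSeq
          (show Multiset.map (Fm.rename d e) (B.inst (Tm.const d) ::ₘ Γ)
            = B.inst (Tm.const e) ::ₘ Γ by
              rw [Multiset.map_cons, Fm.rename_inst, Fm.rename_id e hdB, mapRename_id e hdΓ]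
              simp [Tm.rename]) (Fm.rename_id e hdF) q1
        obtain ⟨q2, hq2⟩ := ih _ _ q1' (by omega) _ (msge_cons (Fm.ge.refl _) hm)
        have hfresh : FreshSeq e ((Fm.ex B) ::ₘ Γ'') ({F} : Multiset Fm) := by
          constructor
          · intro A hA
            rcases Multiset.mem_cons.1 hA with rfl | hA
            · exact fun hcon => heB hcon
            · exact heΓ'' A hA
          · intro A hA
            rw [Multiset.mem_singleton] at hA
            subst hA
            exact heF
        refine ⟨.exL e hfresh heG q2, ?_⟩
        simp only [IGProof.orLCount]; omega
      | ex c' h =>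
        obtain ⟨q1, hq1c, hq1h⟩ := renameIG G n d c' hGd _ _ p (by omega)
        obtain ⟨q1', e1, e2⟩ := castSeq
          (show Multiset.map (Fm.rename d c') (B.inst (Tm.const d) ::ₘ Γ)
            = B.inst (Tm.const c') ::ₘ Γ by
              rw [Multiset.map_cons, Fm.rename_inst, Fm.rename_id c' hdB, mapRename_id c' hdΓ]
              simp [Tm.rename]) (Fm.rename_id c' hdF) q1
        obtain ⟨q2, hq2⟩ := ih _ _ q1' (by omega) _ (msge_cons h hm)
        exact ⟨q2, by simp only [IGProof.orLCount]; omega⟩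
    | @allR B _ d hc hGd p =>
      simp only [IGProof.height] at hp
      have hdB' : ¬ (Fm.all B).constIn d := hc.2 _ (Multiset.mem_singleton_self _)
      have hdB : ¬ B.constIn d := hdB'
      have hdΓ : ∀ A ∈ Δ, ¬ A.constIn d := hc.1
      set e : ℕ := Fm.maxC B + maxCM Δ' + Fm.maxC G + 1 with he
      have heB : ¬ B.constIn e := Fm.not_constIn_of_maxC_lt (by omega)
      have heΔ' : ∀ A ∈ Δ', ¬ A.constIn e := fun A hA =>
        Fm.not_constIn_of_maxC_lt (by have := maxC_le_maxCM hA; omega)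
      have heG : ¬ G.constIn e := Fm.not_constIn_of_maxC_lt (by omega)
      obtain ⟨q1, hq1c, hq1h⟩ := renameIG G n d e hGd _ _ p (by omega)
      obtain ⟨q1', e1, e2⟩ := castSeq (mapRename_id e hdΓ)
        (show Fm.rename d e (B.inst (Tm.const d)) = B.inst (Tm.const e) by
          rw [Fm.rename_inst, Fm.rename_id e hdB]; simp [Tm.rename]) q1
      obtain ⟨q2, hq2⟩ := ih _ _ q1' (by omega) _ hΔ'
      have hfresh : FreshSeq e Δ' ({Fm.all B} : Multiset Fm) := by
        constructor
        · exact heΔ'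
        · intro A hA
          rw [Multiset.mem_singleton] at hA
          subst hA
          exact fun hcon => heB hcon
      refine ⟨.allR e hfresh heG q2, ?_⟩
      simp only [IGProof.orLCount]; omega
    | @orLG B D Γ _ p q =>
      simp only [IGProof.height] at hp
      obtain ⟨F1, Γ'', rfl, hge, hm⟩ := msge_dest hΔ'
      cases hge with
      | refl =>
        obtain ⟨q1, hq1⟩ := ih _ _ p (by omega) _ (msge_cons (Fm.ge.refl B) hm)
        obtain ⟨q2, hq2⟩ := ih _ _ q (by omega) _ (msge_cons (Fm.ge.refl D) hm)
        exact ⟨.orLG q1 q2, by simp only [IGProof.orLCount]; omega⟩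
      | disjl h =>
        obtain ⟨q1, hq1⟩ := ih _ _ p (by omega) _ (msge_cons h hm)
        exact ⟨q1, by simp only [IGProof.orLCount]; omega⟩
      | disjr h =>
        obtain ⟨q2, hq2⟩ := ih _ _ q (by omega) _ (msge_cons h hm)
        exact ⟨.resG q2, by simp only [IGProof.orLCount]; omega⟩
    | @resG _ _ p =>
      simp only [IGProof.height] at hp
      obtain ⟨q1, hq1⟩ := ih _ _ p (by omega) _ hΔ'
      exact ⟨.resG q1, by simp only [IGProof.orLCount]; omega⟩
/-- if `Δ' ⪰ Δ` and `Δ → F` has an I_G-proof with `n`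
occurrences of the ∨-L rule, then `Δ' → F` has an I_G-proof with `n` or fewer
occurrences of the ∨-L rule. -/
theorem statement_14 (G : Fm) (Δ Δ' : Multiset Fm) (h : MsGe Δ' Δ) (F : Fm)
    (p : IGProof G Δ F) :
    ∃ q : IGProof G Δ' F, q.orLCount ≤ p.orLCount :=
  mainIG G p.height Δ F p (le_refl _) Δ' h
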